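/- A partial-coverage RWNN is not complete with respect to 1-WL: there exist non-isomorphic graphs G and H that 1-WL distinguishes, yet whose restricted walk multisets (excluding all walks visiting a designated vertex in each graph) are identical, so any function of the covered walks assigns G and H the same value. -/

import Mathlib

/-!
A walk avoiding `x` uses no edge at `x`, so the covered walks of `G` only depend on
`G.deleteIncidenceSet x`. Adding an isolated vertex `x` or a pendant vertex `x` to a graph `K`
gives the same graph after deleting the edges at `x`, while one round of 1-WL already sees
the degree multiset, which differs. The smallest case, `K` a single vertex, is `⊥` versus `⊤`
on `Fin 2`.
-/

open scoped Classical

namespace RSNN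

/-- The type of (free, injectively-hashed) 1-WL colors after `t` rounds. -/
def WLColorType (σ : Type) : ℕ → Type
  | 0 => σ
  | t + 1 => WLColorType σ t × Multiset (WLColorType σ t)

/-- The 1-dimensional Weisfeiler–Lehman color refinement: round `t+1` (injectively)
hashes the current color of `u` with the multiset of its neighbors' colors. -/
noncomputable def WL {V : Type} [Fintype V] [DecidableEq V]
    (G : SimpleGraph V) [DecidableRel G.Adj] {σ : Type} (π0 : V → σ) :
    (t : ℕ) → V → WLColorType σ t
  | 0 => π0
  | t + 1 => fun u => (WL G π0 t u, (G.neighborFinset u).val.map (WL G π0 t))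

variable {V : Type} [Fintype V] [DecidableEq V]

/-- The multiset of (supports of) all walks in `G` of length at most `ℓ` that avoid
the designated vertex `x` — the "partial coverage" walk multiset. -/
noncomputable def coveredWalks (G : SimpleGraph V) [DecidableRel G.Adj]
    (x : V) (ℓ : ℕ) : Multiset (List V) :=
  ∑ L ∈ Finset.range (ℓ + 1), ∑ a : V, ∑ b : V,
    ((G.finsetWalkLength L a b).val.filter fun p => x ∉ p.support).map fun p => p.support

end RSNN

namespace SimpleGraph

lemma Walk.edges_subset_of_notMem_support {V : Type} {G H : SimpleGraph V} {x a b : V}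
    (hGH : G.deleteIncidenceSet x ≤ H) (p : G.Walk a b) (hx : x ∉ p.support) :
    ∀ e ∈ p.edges, e ∈ H.edgeSet := by
  intro e he
  induction e using Sym2.ind with
  | h u v =>
    have hu : u ≠ x := fun h => hx (h ▸ p.fst_mem_support_of_mem_edges he)
    have hv : v ≠ x := fun h => hx (h ▸ p.snd_mem_support_of_mem_edges he)
    exact hGH (deleteIncidenceSet_adj.mpr ⟨p.edges_subset_edgeSet he, hu, hv⟩)

end SimpleGraph

namespace RSNN

open SimpleGraph

variable {V : Type} [Fintype V] [DecidableEq V]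

noncomputable abbrev avoidingSupports (G : SimpleGraph V) [DecidableRel G.Adj] (x : V)
    (L : ℕ) (a b : V) : Multiset (List V) :=
  ((G.finsetWalkLength L a b).val.filter fun p => x ∉ p.support).map fun p => p.support

lemma mem_avoidingSupports {G : SimpleGraph V} [DecidableRel G.Adj] {x : V} {L : ℕ} {a b : V}
    {l : List V} : l ∈ avoidingSupports G x L a b ↔
      ∃ p : G.Walk a b, p.length = L ∧ x ∉ p.support ∧ p.support = l := by
  simp [avoidingSupports, mem_finsetWalkLength_iff, and_assoc]

lemma nodup_avoidingSupports (G : SimpleGraph V) [DecidableRel G.Adj] (x : V) (L : ℕ)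
    (a b : V) : (avoidingSupports G x L a b).Nodup :=
  ((G.finsetWalkLength L a b).nodup.filter _).map Walk.support_injective

lemma avoidingSupports_subset {G H : SimpleGraph V} [DecidableRel G.Adj] [DecidableRel H.Adj]
    {x : V} (hGH : G.deleteIncidenceSet x ≤ H) (L : ℕ) (a b : V) :
    avoidingSupports G x L a b ⊆ avoidingSupports H x L a b := by
  intro l hl
  obtain ⟨p, rfl, hx, rfl⟩ := mem_avoidingSupports.mp hl
  have hp := p.edges_subset_of_notMem_support hGH hx
  exact mem_avoidingSupports.mpr ⟨p.transfer H hp, by simp, by simpa, by simp⟩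

lemma coveredWalks_eq_of_deleteIncidenceSet_eq {G H : SimpleGraph V} [DecidableRel G.Adj]
    [DecidableRel H.Adj] {x : V} (h : G.deleteIncidenceSet x = H.deleteIncidenceSet x)
    (ℓ : ℕ) : coveredWalks G x ℓ = coveredWalks H x ℓ := by
  refine Finset.sum_congr rfl fun L _ => Finset.sum_congr rfl fun a _ =>
    Finset.sum_congr rfl fun b _ => ?_
  refine (Multiset.Nodup.ext (nodup_avoidingSupports G x L a b)
    (nodup_avoidingSupports H x L a b)).mpr fun l => ⟨fun hl => ?_, fun hl => ?_⟩
  · exact avoidingSupports_subset (h ▸ H.deleteIncidenceSet_le x) L a b hl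
  · exact avoidingSupports_subset (h ▸ G.deleteIncidenceSet_le x) L a b hl

lemma card_snd_WL_one (G : SimpleGraph V) [DecidableRel G.Adj] {σ : Type} (π0 : V → σ)
    (u : V) : Multiset.card (WL G π0 1 u).2 = G.degree u :=
  Multiset.card_map _ _

lemma map_WL_one_ne_of_degrees_ne {G H : SimpleGraph V} [DecidableRel G.Adj]
    [DecidableRel H.Adj] {σ : Type} (π0 : V → σ)
    (h : Finset.univ.val.map (fun u => G.degree u) ≠ Finset.univ.val.map (fun u => H.degree u)) :
    Finset.univ.val.map (WL G π0 1) ≠ Finset.univ.val.map (WL H π0 1) := by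
  intro hWL
  apply h
  have := congrArg (Multiset.map fun c : WLColorType σ 1 => Multiset.card c.2) hWL
  simpa only [Multiset.map_map, Function.comp_def, card_snd_WL_one] using this

/-- A partial-coverage RWNN is not complete w.r.t. 1-WL: there are
non-isomorphic graphs `G, H` that 1-WL distinguishes (via color multisets), yet whose
restricted walk multisets — excluding all walks visiting a designated vertex in each
graph — are identical for every length bound, so any function of the covered walks
assigns `G` and `H` the same value. -/
theorem partial_coverage_not_WL_complete :
    ∃ (N : ℕ) (G H : SimpleGraph (Fin N)) (x y : Fin N),
      IsEmpty (G ≃g H) ∧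
      (∃ t, Multiset.map (WL G (fun _ => ()) t) Finset.univ.val ≠
            Multiset.map (WL H (fun _ => ()) t) Finset.univ.val) ∧
      (∀ ℓ : ℕ, coveredWalks G x ℓ = coveredWalks H y ℓ) ∧
      (∀ {α : Type} (f : Multiset (List (Fin N)) → α) (ℓ : ℕ),
        f (coveredWalks G x ℓ) = f (coveredWalks H y ℓ)) := by
  refine ⟨2, ⊥, ⊤, 1, 1, ⟨fun e => e.map_adj_iff.mp (e.injective.ne zero_ne_one)⟩, ⟨1, ?_⟩,
    (fun hcov => ⟨hcov, fun f ℓ => congrArg f (hcov ℓ)⟩) ?_⟩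
  · -- `convert` trades the classical `DecidableRel` instances of the statement for those of `⊥`, `⊤`.
    convert map_WL_one_ne_of_degrees_ne (G := (⊥ : SimpleGraph (Fin 2))) (H := ⊤) _ ?_
    simp only [bot_degree, complete_graph_degree, Multiset.map_const', Finset.card_val,
      Finset.card_univ, Fintype.card_fin]
    decide
  · convert coveredWalks_eq_of_deleteIncidenceSet_eq (x := (1 : Fin 2)) ?_
    ext u v
    simp only [deleteIncidenceSet_adj, bot_adj, top_adj, false_and, false_iff]
    omega

end RSNN
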